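/- arXiv:2411.09150 — 3 statements merged into one kernel-verified Lean document; each statement's English description precedes it below -/
import Mathlib

section
/- Let μ ∈ (0,1). For all x, y1, y2 ∈ [0,1] with y1 + y2 ≤ 1 and (x,y1,y2) such that x·y1 < 1 and x·y2 < 1, the function f(x,y1,y2) = 2μ² + (1-μ²)(1-x)(1-y1)/(1-x·y1) + (1-μ²)(1-x)(1-y2)/(1-x·y2) satisfies f(x,y1,y2) ≤ 2. -/
open Set

/-- The denominator may vanish (at `x = y = 1`), where the quotient is `0` by convention. -/
lemma one_sub_mul_one_sub_div_one_sub_mul_le_one {x y : ℝ} (hx : x ∈ Icc (0 : ℝ) 1)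
    (hy : y ∈ Icc (0 : ℝ) 1) : (1 - x) * (1 - y) / (1 - x * y) ≤ 1 := by
  obtain ⟨hx0, hx1⟩ := hx
  obtain ⟨hy0, hy1⟩ := hy
  have hxy : x * y ≤ 1 := mul_le_one₀ hx1 hy0 hy1
  -- `(1 - x * y) - (1 - x) * (1 - y) = x * (1 - y) + y * (1 - x)`
  refine div_le_one_of_le₀ ?_ (by linarith)
  nlinarith [mul_nonneg hx0 (sub_nonneg.2 hy1), mul_nonneg hy0 (sub_nonneg.2 hx1)]

lemma mul_one_sub_mul_one_sub_div_le {c x y : ℝ} (hc : 0 ≤ c) (hx : x ∈ Icc (0 : ℝ) 1)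
    (hy : y ∈ Icc (0 : ℝ) 1) : c * (1 - x) * (1 - y) / (1 - x * y) ≤ c := by
  rw [mul_assoc, mul_div_assoc]
  exact mul_le_of_le_one_right hc (one_sub_mul_one_sub_div_one_sub_mul_le_one hx hy)

theorem stmt4_general (μ : ℝ) (hμ : μ ∈ Set.Ioo (0 : ℝ) 1)
    (x y1 y2 : ℝ) (hx : x ∈ Set.Icc (0 : ℝ) 1)
    (hy1 : y1 ∈ Set.Icc (0 : ℝ) 1) (hy2 : y2 ∈ Set.Icc (0 : ℝ) 1) :
    2 * μ ^ 2 + (1 - μ ^ 2) * (1 - x) * (1 - y1) / (1 - x * y1)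
      + (1 - μ ^ 2) * (1 - x) * (1 - y2) / (1 - x * y2) ≤ 2 := by
  have hc : 0 ≤ 1 - μ ^ 2 := sub_nonneg.2 (pow_le_one₀ hμ.1.le hμ.2.le)
  have h1 := mul_one_sub_mul_one_sub_div_le hc hx hy1
  have h2 := mul_one_sub_mul_one_sub_div_le hc hx hy2
  linarith

theorem stmt4 (μ : ℝ) (hμ : μ ∈ Set.Ioo (0 : ℝ) 1)
    (x y1 y2 : ℝ) (hx : x ∈ Set.Icc (0 : ℝ) 1)
    (hy1 : y1 ∈ Set.Icc (0 : ℝ) 1) (hy2 : y2 ∈ Set.Icc (0 : ℝ) 1)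
    (hy : y1 + y2 ≤ 1) (hxy1 : x * y1 < 1) (hxy2 : x * y2 < 1) :
    2 * μ ^ 2 + (1 - μ ^ 2) * (1 - x) * (1 - y1) / (1 - x * y1)
      + (1 - μ ^ 2) * (1 - x) * (1 - y2) / (1 - x * y2) ≤ 2 :=
  stmt4_general μ hμ x y1 y2 hx hy1 hy2
end

section
/- Let p, q ∈ (0,1) with 1/2 ≤ p < q < 1. Then the Kullback–Leibler divergences of the corresponding Bernoulli distributions satisfy D_KL(p||q) > D_KL(q||p), where D_KL(p||q) = p·ln(p/q) + (1-p)·ln((1-p)/(1-q)). -/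
lemma key1 (u : ℝ) (hu : 1 < u) : 2 * Real.log u < u - 1 / u := by
  have hmono : StrictMonoOn (fun x : ℝ => x - x⁻¹ - 2 * Real.log x) (Set.Ici 1) := by
    apply strictMonoOn_of_deriv_pos (convex_Ici 1)
    · apply ContinuousOn.sub
      · apply ContinuousOn.sub continuousOn_id
        exact ContinuousOn.inv₀ continuousOn_id
          (fun x hx => by have : (1:ℝ) ≤ x := hx; exact by positivity)
      · exact ContinuousOn.const_smul (Real.continuousOn_log.mono
          (fun x hx => by have : (1:ℝ) ≤ x := hx; simp; positivity)) 2 |>.congr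
          (fun x _ => by simp [smul_eq_mul])
    · intro x hx
      rw [interior_Ici] at hx
      have hx0 : (0:ℝ) < x := lt_trans one_pos hx
      have hd : HasDerivAt (fun x : ℝ => x - x⁻¹ - 2 * Real.log x)
          (1 - (-(x ^ 2)⁻¹) - 2 * x⁻¹) x := by
        have h1 := (hasDerivAt_id x).sub (hasDerivAt_inv hx0.ne')
        have h2 := (Real.hasDerivAt_log hx0.ne').const_mul 2
        exact h1.sub h2
      rw [hd.deriv]
      have hx1 : (1:ℝ) < x := hx
      have hne : x - 1 ≠ 0 := by linarith
      have heq : (1:ℝ) - (-(x ^ 2)⁻¹) - 2 * x⁻¹ = (x - 1) ^ 2 / x ^ 2 := by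
        field_simp
        ring
      rw [heq]
      positivity
  have h01 : (1:ℝ) ∈ Set.Ici (1:ℝ) := Set.mem_Ici.mpr le_rfl
  have hu1 : u ∈ Set.Ici (1:ℝ) := Set.mem_Ici.mpr hu.le
  have := hmono h01 hu1 hu
  simp only [Real.log_one] at this
  have : (0:ℝ) < u - u⁻¹ - 2 * Real.log u := by simpa using this
  rw [one_div]
  linarith

lemma key2 (t b a : ℝ) (ht : 0 < t) (htb : t < b) (hba : b < a) :
    a * (Real.log (a + t) - Real.log (a - t)) <
      b * (Real.log (b + t) - Real.log (b - t)) := by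
  have hanti : StrictAntiOn (fun x : ℝ => x * (Real.log (x + t) - Real.log (x - t)))
      (Set.Ioi t) := by
    apply strictAntiOn_of_deriv_neg (convex_Ioi t)
    · intro x hx
      have hx' : t < x := hx
      have h1 : x + t ≠ 0 := ne_of_gt (by linarith : (0:ℝ) < x + t)
      have h2 : x - t ≠ 0 := sub_ne_zero.mpr hx'.ne'
      have c1 : ContinuousAt (fun y : ℝ => Real.log (y + t)) x :=
        ContinuousAt.log (continuousAt_id.add continuousAt_const) h1
      have c2 : ContinuousAt (fun y : ℝ => Real.log (y - t)) x :=
        ContinuousAt.log (continuousAt_id.sub continuousAt_const) h2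
      exact (continuousAt_id.mul (c1.sub c2)).continuousWithinAt
    · intro x hx
      rw [interior_Ioi] at hx
      have hxt : 0 < x - t := sub_pos.mpr hx
      have hxt' : 0 < x + t := by linarith
      have h1 : HasDerivAt (fun y : ℝ => Real.log (y + t)) (x + t)⁻¹ x := by
        have := (Real.hasDerivAt_log hxt'.ne').comp x ((hasDerivAt_id x).add_const t)
        simpa [Function.comp_def] using this
      have h2 : HasDerivAt (fun y : ℝ => Real.log (y - t)) (x - t)⁻¹ x := by
        have := (Real.hasDerivAt_log hxt.ne').comp x ((hasDerivAt_id x).sub_const t)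
        simpa [Function.comp_def] using this
      have hd : HasDerivAt (fun y : ℝ => y * (Real.log (y + t) - Real.log (y - t)))
          (1 * (Real.log (x + t) - Real.log (x - t)) + x * ((x + t)⁻¹ - (x - t)⁻¹)) x :=
        (hasDerivAt_id x).mul (h1.sub h2)
      rw [hd.deriv]
      have hu : 1 < (x + t) / (x - t) := (one_lt_div hxt).mpr (by linarith)
      have hk := key1 _ hu
      rw [Real.log_div hxt'.ne' hxt.ne'] at hk
      have heq : (x + t) / (x - t) - 1 / ((x + t) / (x - t))
          = 2 * (2 * t * x / ((x - t) * (x + t))) := by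
        field_simp
        ring
      have heq2 : x * ((x + t)⁻¹ - (x - t)⁻¹) = -(2 * t * x / ((x - t) * (x + t))) := by
        field_simp
        ring
      rw [heq] at hk
      rw [heq2]
      linarith
  exact hanti (Set.mem_Ioi.mpr htb) (Set.mem_Ioi.mpr (lt_trans htb hba)) hba

noncomputable def klBern (p q : ℝ) : ℝ :=
  p * Real.log (p / q) + (1 - p) * Real.log ((1 - p) / (1 - q))

theorem stmt10 (p q : ℝ) (hp : (1 : ℝ) / 2 ≤ p) (hpq : p < q) (hq : q < 1) :
    klBern q p < klBern p q := by
  have hp0 : 0 < p := by linarith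
  have hq0 : 0 < q := by linarith
  have h1p : 0 < 1 - p := by linarith
  have h1q : 0 < 1 - q := by linarith
  have key := key2 ((q - p) / 2) (1 - (p + q) / 2) ((p + q) / 2)
    (by linarith) (by linarith) (by linarith)
  have e1 : (p + q) / 2 + (q - p) / 2 = q := by ring
  have e2 : (p + q) / 2 - (q - p) / 2 = p := by ring
  have e3 : 1 - (p + q) / 2 + (q - p) / 2 = 1 - p := by ring
  have e4 : 1 - (p + q) / 2 - (q - p) / 2 = 1 - q := by ring
  rw [e1, e2, e3, e4] at key
  unfold klBern
  rw [Real.log_div hq0.ne' hp0.ne', Real.log_div hp0.ne' hq0.ne',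
      Real.log_div h1q.ne' h1p.ne', Real.log_div h1p.ne' h1q.ne']
  nlinarith [key]
end

section
/- For p, q ∈ (0,1), the function φ(s,t) = s·ln(t/s) + (1-s)·ln((1-t)/(1-s)) satisfies φ(p,q) - φ(q,p) = -(D_KL(p||q) - D_KL(q||p)), where D_KL denotes the Bernoulli KL divergence with natural logarithm. In particular if 1/2 ≤ p < q < 1 then φ(p,q) - φ(q,p) < 0. -/
noncomputable def phi12 (s t : ℝ) : ℝ :=
  s * Real.log (t / s) + (1 - s) * Real.log ((1 - t) / (1 - s))

private lemma two_log_lt {x : ℝ} (hx : 1 < x) : 2 * Real.log x < x - 1/x := by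
  have hx0 : 0 < x := lt_trans one_pos hx
  have hu : 0 < Real.log x := Real.log_pos hx
  have hs : Real.log x < Real.sinh (Real.log x) := Real.self_lt_sinh_iff.mpr hu
  rw [Real.sinh_eq, Real.exp_log hx0, Real.exp_neg, Real.exp_log hx0] at hs
  rw [one_div]
  linarith

noncomputable def gdiff (p t : ℝ) : ℝ :=
  (p + t) * (Real.log p - Real.log t) + (2 - p - t) * (Real.log (1-p) - Real.log (1-t))

private lemma gdiff_hasDeriv (p : ℝ) (hp0 : 0 < p) (hp1 : p < 1) {t : ℝ}
    (ht0 : 0 < t) (ht1 : t < 1) :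
    HasDerivAt (gdiff p) ((t-p)/(t*(1-t)) - Real.log (t*(1-p)/(p*(1-t)))) t := by
  have hlt : HasDerivAt (fun t : ℝ => Real.log t) t⁻¹ t := Real.hasDerivAt_log (ne_of_gt ht0)
  have hl1t : HasDerivAt (fun t : ℝ => Real.log (1 - t)) (-(1-t)⁻¹) t := by
    have h1 : HasDerivAt (fun t : ℝ => 1 - t) (-1) t := by
      simpa using (hasDerivAt_id t).const_sub 1
    have := (Real.hasDerivAt_log (x := 1 - t) (by linarith)).comp t h1
    exact this.congr_deriv (by ring)
  have h1 : HasDerivAt (fun t : ℝ => (p + t) * (Real.log p - Real.log t))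
      (1 * (Real.log p - Real.log t) + (p + t) * (0 - t⁻¹)) t := by
    exact (((hasDerivAt_id t).const_add p)).mul ((hasDerivAt_const t (Real.log p)).sub hlt)
  have h2 : HasDerivAt (fun t : ℝ => (2 - p - t) * (Real.log (1-p) - Real.log (1-t)))
      ((-1) * (Real.log (1-p) - Real.log (1-t)) + (2 - p - t) * (0 - (-(1-t)⁻¹))) t := by
    have hc : HasDerivAt (fun t : ℝ => 2 - p - t) (-1) t := by
      simpa using (hasDerivAt_id t).const_sub (2 - p)
    exact hc.mul ((hasDerivAt_const t (Real.log (1-p))).sub hl1t)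
  have := h1.add h2
  refine this.congr_deriv ?_
  have hlog : Real.log (t*(1-p)/(p*(1-t)))
      = Real.log t + Real.log (1-p) - (Real.log p + Real.log (1-t)) := by
    rw [Real.log_div (mul_ne_zero (ne_of_gt ht0) (by linarith)) (mul_ne_zero (ne_of_gt hp0) (by linarith)), Real.log_mul (ne_of_gt ht0) (by linarith),
        Real.log_mul (ne_of_gt hp0) (by linarith)]
  rw [hlog]
  have htne : t ≠ 0 := ne_of_gt ht0
  have h1tne : (1:ℝ) - t ≠ 0 := by linarith
  field_simp
  ring

private lemma key_deriv_pos (p : ℝ) (hp : 1/2 ≤ p) {t : ℝ} (hpt : p < t) (ht1 : t < 1) :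
    0 < (t-p)/(t*(1-t)) - Real.log (t*(1-p)/(p*(1-t))) := by
  have hp0 : 0 < p := lt_of_lt_of_le (by norm_num) hp
  have ht0 : 0 < t := lt_trans hp0 hpt
  have h1p : 0 < 1 - p := by linarith
  have h1t : 0 < 1 - t := by linarith
  set A := t*(1-p)/(p*(1-t)) with hA
  have hA1 : 1 < A := by
    rw [hA, lt_div_iff₀ (by positivity)]
    nlinarith
  have hlog := two_log_lt hA1
  have hAval : A - 1/A = (t-p)*(t+p-2*p*t)/(p*t*(1-p)*(1-t)) := by
    rw [hA]
    field_simp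
    ring
  have hineq : (t-p)*(t+p-2*p*t)/(p*t*(1-p)*(1-t)) ≤ 2 * ((t-p)/(t*(1-t))) := by
    rw [div_le_iff₀ (by positivity)]
    have h : (t-p)*(2*p-1) ≥ 0 := mul_nonneg (by linarith) (by linarith)
    have expand : 2 * ((t-p)/(t*(1-t))) * (p*t*(1-p)*(1-t)) = 2*(t-p)*p*(1-p) := by
      field_simp
    rw [expand]
    nlinarith
  have : 2 * Real.log A < 2 * ((t-p)/(t*(1-t))) := by
    calc 2 * Real.log A < A - 1/A := hlog
      _ = (t-p)*(t+p-2*p*t)/(p*t*(1-p)*(1-t)) := hAval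
      _ ≤ 2 * ((t-p)/(t*(1-t))) := hineq
  linarith

private lemma gdiff_pos (p q : ℝ) (hp : 1/2 ≤ p) (hpq : p < q) (hq1 : q < 1) :
    0 < gdiff p q := by
  have hp0 : 0 < p := lt_of_lt_of_le (by norm_num) hp
  have hp1 : p < 1 := lt_trans hpq hq1
  have hmono : StrictMonoOn (gdiff p) (Set.Icc p q) := by
    apply strictMonoOn_of_deriv_pos (convex_Icc p q)
    · intro x hx
      have hx0 : 0 < x := lt_of_lt_of_le hp0 hx.1
      have hx1 : x < 1 := lt_of_le_of_lt hx.2 hq1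
      exact (gdiff_hasDeriv p hp0 hp1 hx0 hx1).continuousAt.continuousWithinAt
    · intro x hx
      rw [interior_Icc] at hx
      have hx0 : 0 < x := lt_trans hp0 hx.1
      have hx1 : x < 1 := lt_trans hx.2 hq1
      rw [(gdiff_hasDeriv p hp0 hp1 hx0 hx1).deriv]
      exact key_deriv_pos p hp hx.1 hx1
  have h0 : gdiff p p = 0 := by unfold gdiff; ring
  have := hmono (Set.left_mem_Icc.2 (le_of_lt hpq)) (Set.right_mem_Icc.2 (le_of_lt hpq)) hpq
  rw [h0] at this
  exact this

private lemma kl_diff_eq (p q : ℝ) (hp : p ∈ Set.Ioo (0:ℝ) 1) (hq : q ∈ Set.Ioo (0:ℝ) 1) :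
    klBern p q - klBern q p = gdiff p q := by
  obtain ⟨hp0, hp1⟩ := hp
  obtain ⟨hq0, hq1⟩ := hq
  unfold klBern gdiff
  rw [Real.log_div (ne_of_gt hp0) (ne_of_gt hq0),
      Real.log_div (by linarith : (1:ℝ) - p ≠ 0) (by linarith : (1:ℝ) - q ≠ 0),
      Real.log_div (ne_of_gt hq0) (ne_of_gt hp0),
      Real.log_div (by linarith : (1:ℝ) - q ≠ 0) (by linarith : (1:ℝ) - p ≠ 0)]
  ring

private lemma phi_eq_neg_kl (p q : ℝ) (hp : p ∈ Set.Ioo (0:ℝ) 1) (hq : q ∈ Set.Ioo (0:ℝ) 1) :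
    phi12 p q = -klBern p q := by
  obtain ⟨hp0, hp1⟩ := hp
  obtain ⟨hq0, hq1⟩ := hq
  unfold phi12 klBern
  rw [Real.log_div (ne_of_gt hp0) (ne_of_gt hq0),
      Real.log_div (by linarith : (1:ℝ) - p ≠ 0) (by linarith : (1:ℝ) - q ≠ 0),
      Real.log_div (ne_of_gt hq0) (ne_of_gt hp0),
      Real.log_div (by linarith : (1:ℝ) - q ≠ 0) (by linarith : (1:ℝ) - p ≠ 0)]
  ring

theorem stmt12 (p q : ℝ) (hp : p ∈ Set.Ioo (0 : ℝ) 1) (hq : q ∈ Set.Ioo (0 : ℝ) 1) :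
    phi12 p q - phi12 q p = -(klBern p q - klBern q p) ∧
    ((1 : ℝ) / 2 ≤ p → p < q → phi12 p q - phi12 q p < 0) := by
  have e1 := phi_eq_neg_kl p q hp hq
  have e2 := phi_eq_neg_kl q p hq hp
  constructor
  · rw [e1, e2]; ring
  · intro hhalf hpq
    rw [e1, e2]
    have := gdiff_pos p q hhalf hpq hq.2
    rw [← kl_diff_eq p q hp hq] at this
    linarith
end
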